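/- arXiv:1710.01810 — 5 statements merged into one kernel-verified Lean document; each statement's English description precedes it below -/
import Mathlib

section
/- The bilinear product on the 3-dimensional vector space with basis (e1, e2, d) defined by e1·d = α e1, e2·d = α e2, d·e1 = α e1 + e2, d·e2 = -e1 + α e2, d·d = α d (all other products of basis vectors zero), where α is a real number, is left symmetric, i.e., (xy)z - x(yz) = (yx)z - y(xz) for all x,y,z, and its commutator bracket [x,y] = xy - yx satisfies [d,e1] = e2, [d,e2] = -e1, [e1,e2] = 0. -/
namespace Stmt0
noncomputable section

/-- Product on `e(2)` with basis `e1, e2, d` (coords 0,1,2):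
`e1·d = α e1`, `e2·d = α e2`, `d·e1 = α e1 + e2`, `d·e2 = -e1 + α e2`, `d·d = α d`. -/
def mul (α : ℝ) (x y : Fin 3 → ℝ) : Fin 3 → ℝ :=
  ![α * x 0 * y 2 + α * x 2 * y 0 - x 2 * y 1,
    α * x 1 * y 2 + x 2 * y 0 + α * x 2 * y 1,
    α * x 2 * y 2]

def e1 : Fin 3 → ℝ := ![1, 0, 0]
def e2 : Fin 3 → ℝ := ![0, 1, 0]
def d : Fin 3 → ℝ := ![0, 0, 1]

theorem stmt0 (α : ℝ) :
    (∀ x y z : Fin 3 → ℝ,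
      mul α (mul α x y) z - mul α x (mul α y z) =
        mul α (mul α y x) z - mul α y (mul α x z)) ∧
    mul α d e1 - mul α e1 d = e2 ∧
    mul α d e2 - mul α e2 d = -e1 ∧
    mul α e1 e2 - mul α e2 e1 = 0 := by
  refine ⟨fun x y z => ?_, ?_, ?_, ?_⟩ <;>
    funext i <;> fin_cases i <;>
    simp [mul, e1, e2, d, Fin.isValue, Matrix.cons_val_zero, Matrix.cons_val_one] <;> ring

end
end Stmt0
end

section
/- Let g be a real Lie algebra with dual g* and r a bivector such that r♯: g* → g (defined by β(r♯(α)) = r(α,β)) satisfies the classical Yang-Baxter condition α([r♯β, r♯γ]) + β([r♯γ, r♯α]) + γ([r♯α, r♯β]) = 0 for all α, β, γ in g*. Then the product on g* defined by α·β = -ad*_{r♯(α)}(β) (where ad* is the coadjoint action, (ad*_x β)(y) = -β([x,y])) is left symmetric, and its commutator bracket equals [α,β]_r = ad*_{r♯β}(α) - ad*_{r♯α}(β). -/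
/-- For a solution `r` of the classical Yang–Baxter equation on a finite-dimensional
real Lie algebra `g`, the product `α·β = -ad*_{r♯α} β = β ∘ ad(r♯α)` on the dual `g*`
is left symmetric and its commutator bracket equals
`[α,β]_r = ad*_{r♯β} α - ad*_{r♯α} β`. -/
theorem stmt12 {g : Type*} [LieRing g] [LieAlgebra ℝ g] [FiniteDimensional ℝ g]
    (r : Module.Dual ℝ g →ₗ[ℝ] Module.Dual ℝ g →ₗ[ℝ] ℝ)
    (hskew : ∀ α β, r α β = -r β α)
    (rs : Module.Dual ℝ g →ₗ[ℝ] g)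
    (hrs : ∀ α β, β (rs α) = r α β)
    (hCYBE : ∀ α β γ : Module.Dual ℝ g,
      α ⁅rs β, rs γ⁆ + β ⁅rs γ, rs α⁆ + γ ⁅rs α, rs β⁆ = 0)
    (mul : Module.Dual ℝ g → Module.Dual ℝ g → Module.Dual ℝ g)
    (hmul : ∀ α β, mul α β = β.comp (LieAlgebra.ad ℝ g (rs α))) :
    (∀ α β γ, mul (mul α β) γ - mul α (mul β γ) =
      mul (mul β α) γ - mul β (mul α γ)) ∧
    (∀ α β, mul α β - mul β α =
      (-(α.comp (LieAlgebra.ad ℝ g (rs β)))) - (-(β.comp (LieAlgebra.ad ℝ g (rs α))))) := by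
  -- Key: evaluating a dual element on `rs` of another.
  have hdual : ∀ α β : Module.Dual ℝ g, β (rs α) = -α (rs β) := by
    intro α β
    rw [hrs, hskew, hrs]
  -- Key lemma: rs (mul α β) = rs (mul β α) - ⁅rs α, rs β⁆.
  have key : ∀ α β, rs (mul α β) = rs (mul β α) - ⁅rs α, rs β⁆ := by
    intro α β
    have h : ∀ δ : Module.Dual ℝ g,
        δ (rs (mul α β) - (rs (mul β α) - ⁅rs α, rs β⁆)) = 0 := by
      intro δ
      have h1 : δ (rs (mul α β)) = -β ⁅rs α, rs δ⁆ := by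
        rw [hdual (mul α β) δ, hmul]
        simp [LieAlgebra.ad_apply]
      have h2 : δ (rs (mul β α)) = -α ⁅rs β, rs δ⁆ := by
        rw [hdual (mul β α) δ, hmul]
        simp [LieAlgebra.ad_apply]
      have h3 := hCYBE α β δ
      have h4 : β ⁅rs δ, rs α⁆ = -β ⁅rs α, rs δ⁆ := by
        rw [← lie_skew, map_neg]
      simp only [map_sub, h1, h2]
      rw [h4] at h3
      linarith
    have := (Module.forall_dual_apply_eq_zero_iff ℝ
      (rs (mul α β) - (rs (mul β α) - ⁅rs α, rs β⁆))).mp h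
    linear_combination (norm := module) this
  constructor
  · intro α β γ
    ext x
    simp only [LinearMap.sub_apply, hmul, LinearMap.coe_comp, Function.comp_apply,
      LieAlgebra.ad_apply]
    have key2 := key α β
    rw [hmul α β, hmul β α] at key2
    rw [key2, sub_lie, map_sub, lie_lie, map_sub]
    ring
  · intro α β
    rw [hmul, hmul]
    abel
end

section
/- The 4-dimensional vector space with basis (e0*, e1*, e2*, d*) and brackets [e0*, e1*] = -α2 d* + α3 e2*, [e0*, e2*] = α1 d* - α3 e1* (other brackets zero), for real parameters α1, α2, α3, is a Lie algebra (the Jacobi identity holds), and the bilinear product e0*·e0* = α2 e1* - α1 e2*, e0*·e1* = -α2 d* + α3 e2*, e0*·e2* = α1 d* - α3 e1* (other products zero) is left symmetric with commutator bracket equal to this Lie bracket. -/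
namespace Stmt13
noncomputable section

/-- Bracket of the dual Lie algebra `o*(r)`, basis `e0*, e1*, e2*, d*` (coords 0,1,2,3):
`[e0*,e1*] = -α2 d* + α3 e2*`, `[e0*,e2*] = α1 d* - α3 e1*`, other brackets zero. -/
def bracket (α1 α2 α3 : ℝ) (x y : Fin 4 → ℝ) : Fin 4 → ℝ :=
  ![0,
    -α3 * (x 0 * y 2 - x 2 * y 0),
    α3 * (x 0 * y 1 - x 1 * y 0),
    -α2 * (x 0 * y 1 - x 1 * y 0) + α1 * (x 0 * y 2 - x 2 * y 0)]

/-- Product: `e0*·e0* = α2 e1* - α1 e2*`, `e0*·e1* = -α2 d* + α3 e2*`,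
`e0*·e2* = α1 d* - α3 e1*`, other products of basis vectors zero. -/
def mul (α1 α2 α3 : ℝ) (x y : Fin 4 → ℝ) : Fin 4 → ℝ :=
  ![0,
    α2 * x 0 * y 0 - α3 * x 0 * y 2,
    -α1 * x 0 * y 0 + α3 * x 0 * y 1,
    -α2 * x 0 * y 1 + α1 * x 0 * y 2]

theorem stmt13 (α1 α2 α3 : ℝ) :
    (∀ x y z : Fin 4 → ℝ,
      bracket α1 α2 α3 (bracket α1 α2 α3 x y) z
        + bracket α1 α2 α3 (bracket α1 α2 α3 y z) x
        + bracket α1 α2 α3 (bracket α1 α2 α3 z x) y = 0) ∧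
    (∀ x y, bracket α1 α2 α3 x y = -bracket α1 α2 α3 y x) ∧
    (∀ x y z : Fin 4 → ℝ,
      mul α1 α2 α3 (mul α1 α2 α3 x y) z - mul α1 α2 α3 x (mul α1 α2 α3 y z) =
        mul α1 α2 α3 (mul α1 α2 α3 y x) z - mul α1 α2 α3 y (mul α1 α2 α3 x z)) ∧
    (∀ x y, mul α1 α2 α3 x y - mul α1 α2 α3 y x = bracket α1 α2 α3 x y) := by
  refine ⟨fun x y z => ?_, fun x y => ?_, fun x y z => ?_, fun x y => ?_⟩ <;>
    funext i <;> fin_cases i <;>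
    simp [bracket, mul, Fin.isValue, Matrix.cons_val_zero, Matrix.cons_val_one,
      Matrix.head_cons] <;> ring

end
end Stmt13
end

section
/- The binary operation on ℝ⁴ given by (x,y,z,w)·(x',y',z',w') = (x + x' + (w - z)y' + w z' + z w', y + y', z + z', w + w') makes ℝ⁴ into a group with identity (0,0,0,0). -/
namespace Stmt15
noncomputable section

/-- The product on `ℝ⁴`:
`(x,y,z,w)·(x',y',z',w') = (x + x' + (w - z)y' + w z' + z w', y + y', z + z', w + w')`. -/
def mul (p q : ℝ × ℝ × ℝ × ℝ) : ℝ × ℝ × ℝ × ℝ :=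
  (p.1 + q.1 + (p.2.2.2 - p.2.2.1) * q.2.1 + p.2.2.2 * q.2.2.1 + p.2.2.1 * q.2.2.2,
   p.2.1 + q.2.1,
   p.2.2.1 + q.2.2.1,
   p.2.2.2 + q.2.2.2)

/-- This product makes `ℝ⁴` a group with identity `(0,0,0,0)`. -/
theorem stmt15 :
    (∀ p q r, mul (mul p q) r = mul p (mul q r)) ∧
    (∀ p, mul (0, 0, 0, 0) p = p) ∧
    (∀ p, mul p (0, 0, 0, 0) = p) ∧
    (∀ p, ∃ q, mul p q = (0, 0, 0, 0) ∧ mul q p = (0, 0, 0, 0)) := by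
  refine ⟨fun p q r => ?_, fun p => ?_, fun p => ?_, fun p => ?_⟩
  · simp only [mul, Prod.mk.injEq]; ring_nf; tauto
  · simp [mul]
  · simp [mul]
  · refine ⟨(-p.1 + (p.2.2.2 - p.2.2.1) * p.2.1 + 2 * p.2.2.2 * p.2.2.1,
        -p.2.1, -p.2.2.1, -p.2.2.2), ?_, ?_⟩ <;>
      · simp only [mul, Prod.mk.injEq]; refine ⟨by ring, by ring, by ring, by ring⟩

end
end Stmt15
end

section
/- Let f = (f1, f2): ℝ₊×ℝ → ℝ₊×ℝ be the map f(x,y) = (a x e^y / (1 + a x e^y p(y)), a e^y), where a > 0 and p is a smooth positive function. Then f satisfies the symplectomorphism equation (∂f1/∂x)(∂f2/∂y) - (∂f1/∂y)(∂f2/∂x) = (f1/x)². -/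
/-- The map `f(x,y) = (a x e^y / (1 + a x e^y p(y)), a e^y)` with `a > 0` and `p`
smooth and positive satisfies the symplectomorphism equation
`(∂f1/∂x)(∂f2/∂y) - (∂f1/∂y)(∂f2/∂x) = (f1/x)²` on `{x > 0}`. -/
theorem stmt18 (a : ℝ) (ha : 0 < a) (p : ℝ → ℝ)
    (hp : ContDiff ℝ (⊤ : ℕ∞) p) (hppos : ∀ y, 0 < p y)
    (f1 f2 : ℝ → ℝ → ℝ)
    (hf1 : ∀ x y, f1 x y = a * x * Real.exp y / (1 + a * x * Real.exp y * p y))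
    (hf2 : ∀ x y, f2 x y = a * Real.exp y) :
    ∀ x : ℝ, 0 < x → ∀ y : ℝ,
      deriv (fun t => f1 t y) x * deriv (fun t => f2 x t) y
        - deriv (fun t => f1 x t) y * deriv (fun t => f2 t y) x
      = (f1 x y / x) ^ 2 := by
  intro x hx y
  have hpy := hppos y
  have hD : (0:ℝ) < 1 + a * x * Real.exp y * p y := by positivity
  have h1 : HasDerivAt (fun t : ℝ => a * t * Real.exp y) (a * Real.exp y) x := by
    simpa using ((hasDerivAt_id x).const_mul a).mul_const (Real.exp y)
  have h2 : HasDerivAt (fun t : ℝ => 1 + a * t * Real.exp y * p y)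
      (a * Real.exp y * p y) x := (h1.mul_const (p y)).const_add 1
  have hder : deriv (fun t => f1 t y) x
      = a * Real.exp y / (1 + a * x * Real.exp y * p y) ^ 2 := by
    have : deriv (fun t : ℝ => a * t * Real.exp y / (1 + a * t * Real.exp y * p y)) x = _ :=
      (h1.div h2 hD.ne').deriv
    have heq : (fun t => f1 t y)
        = fun t : ℝ => a * t * Real.exp y / (1 + a * t * Real.exp y * p y) := by
      funext t; exact hf1 t y
    rw [heq, this]
    field_simp
    ring
  have hc : deriv (fun t => f2 t y) x = 0 := by
    have heq : (fun t => f2 t y) = fun _ : ℝ => a * Real.exp y := by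
      funext t; exact hf2 t y
    rw [heq, deriv_const]
  have hd2 : deriv (fun t => f2 x t) y = a * Real.exp y := by
    have heq : (fun t => f2 x t) = fun t : ℝ => a * Real.exp t := by
      funext t; exact hf2 x t
    rw [heq]
    simpa using ((Real.hasDerivAt_exp y).const_mul a).deriv
  rw [hder, hc, hd2, hf1, mul_zero, sub_zero]
  field_simp
end
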